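/- arXiv:2106.07537 — 3 statements merged into one kernel-verified Lean document; each statement's English description precedes it below -/
import Mathlib

section
/- The function g(z) = z·tanh(z) is Lipschitz continuous on ℝ with Lipschitz constant at most 1.2, i.e., |z₁·tanh(z₁) - z₂·tanh(z₂)| ≤ 1.2·|z₁ - z₂| for all real z₁, z₂. -/
/-!
By the mean value theorem it suffices to bound `g'(x) = tanh x + x / cosh² x` by `1.2` in absolute
value, and since `g'` is odd, the upper bound suffices. Clearing denominators, it says
`x ≤ 1.2 cosh² x - sinh x cosh x = e^{2x} / 20 + 3/5 + 11 e^{-2x} / 20`, which follows from the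
tangent-line bound `u + 1 ≤ e^u` at `u = 2x - log 11` and `u = log 11 - 2x`, since `log 11 ≤ 2.4`.
-/

open Real

theorem Real.hasDerivAt_tanh (x : ℝ) : HasDerivAt tanh (1 / cosh x ^ 2) x := by
  rw [show tanh = fun y => sinh y / cosh y from funext tanh_eq_sinh_div_cosh]
  refine ((hasDerivAt_sinh x).div (hasDerivAt_cosh x) (cosh_pos x).ne').congr_deriv ?_
  rw [← sq, ← sq, cosh_sq_sub_sinh_sq]

theorem hasDerivAt_mul_tanh (x : ℝ) :
    HasDerivAt (fun y => y * tanh y) (tanh x + x / cosh x ^ 2) x := by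
  refine ((hasDerivAt_id' x).mul (hasDerivAt_tanh x)).congr_deriv ?_
  rw [one_mul, mul_one_div]

theorem log_eleven_le : log 11 ≤ 2.4 := by
  rw [log_le_iff_le_exp (by norm_num)]
  refine le_of_pow_le_pow_left₀ (n := 5) (by norm_num) (exp_nonneg _) ?_
  calc (11 : ℝ) ^ 5 ≤ 2.7182818283 ^ 12 := by norm_num
    _ ≤ exp 1 ^ 12 := by gcongr; exact exp_one_gt_d9.le
    _ = exp 2.4 ^ 5 := by rw [← exp_nat_mul, ← exp_nat_mul]; norm_num

theorem half_le_exp_add_exp_neg (x : ℝ) : x / 2 ≤ exp x / 20 + 3 / 5 + 11 / 20 * exp (-x) := by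
  have h₁ := add_one_le_exp (x - log 11)
  have h₂ := add_one_le_exp (-x + log 11)
  rw [exp_sub, exp_log (by norm_num)] at h₁
  rw [exp_add, exp_log (by norm_num)] at h₂
  linarith [log_eleven_le]

theorem tanh_add_div_cosh_sq_le (x : ℝ) : tanh x + x / cosh x ^ 2 ≤ 1.2 := by
  have key : x + sinh x * cosh x ≤ 1.2 * cosh x ^ 2 := by
    have h := half_le_exp_add_exp_neg (2 * x)
    have hx : exp x * exp (-x) = 1 := by rw [← exp_add, add_neg_cancel, exp_zero]
    rw [two_mul, neg_add, exp_add, exp_add] at h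
    rw [cosh_eq, sinh_eq]
    linear_combination h - 3 / 5 * hx
  calc tanh x + x / cosh x ^ 2 = (x + sinh x * cosh x) / cosh x ^ 2 := by
        rw [tanh_eq_sinh_div_cosh]; field_simp; ring
    _ ≤ 1.2 := by rwa [div_le_iff₀ (by positivity)]

theorem abs_tanh_add_div_cosh_sq_le (x : ℝ) : |tanh x + x / cosh x ^ 2| ≤ 1.2 := by
  refine abs_le.2 ⟨?_, tanh_add_div_cosh_sq_le x⟩
  have h := tanh_add_div_cosh_sq_le (-x)
  rw [tanh_neg, cosh_neg, neg_div] at h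
  linarith

theorem mul_tanh_lipschitz (z₁ z₂ : ℝ) :
    |z₁ * Real.tanh z₁ - z₂ * Real.tanh z₂| ≤ 1.2 * |z₁ - z₂| := by
  simpa only [Real.norm_eq_abs] using convex_univ.norm_image_sub_le_of_norm_hasDerivWithin_le
    (fun x _ => (hasDerivAt_mul_tanh x).hasDerivWithinAt)
    (fun x _ => abs_tanh_add_div_cosh_sq_le x) (Set.mem_univ z₂) (Set.mem_univ z₁)
end

section
/- For all real z, |tanh(z) + z·sech²(z)| ≤ 1.2. -/
lemma log_eleven_le_s2 : Real.log 11 ≤ 2.4 := by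
  have h9 := Real.exp_one_gt_d9
  have h12 : (11:ℝ)^5 < (Real.exp 1)^12 := by
    calc (11:ℝ)^5 = 161051 := by norm_num
    _ < 2.7182818283^12 := by norm_num
    _ ≤ (Real.exp 1)^12 := by
        apply pow_le_pow_left₀ (by norm_num) (le_of_lt h9)
  have hexp12 : (Real.exp 1)^12 = Real.exp (2.4) ^ 5 := by
    rw [← Real.exp_nat_mul, ← Real.exp_nat_mul]
    norm_num
  have h11 : (11:ℝ) < Real.exp 2.4 := by
    refine lt_of_pow_lt_pow_left₀ 5 (Real.exp_pos _).le ?_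
    rw [← hexp12]; exact h12
  rw [show (2.4:ℝ) = Real.log (Real.exp 2.4) by rw [Real.log_exp]]
  exact Real.log_le_log (by norm_num) h11.le

lemma key_log (u : ℝ) (hu : 0 < u) : Real.log (1/u) ≤ 0.1/u + 1.2 + 1.1*u := by
  have h1 : Real.log (1/(11*u)) ≤ 1/(11*u) - 1 :=
    Real.log_le_sub_one_of_pos (by positivity)
  have h2 : Real.log (1/u) = Real.log (1/(11*u)) + Real.log 11 := by
    rw [← Real.log_mul (by positivity) (by norm_num)]
    congr 1; field_simp
  have h3 := log_eleven_le_s2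
  have h4 : (11*u - 1)^2 ≥ 0 := sq_nonneg _
  have h5 : 1/(11*u) = 1/11 * (1/u) := by field_simp
  have h6 : 0.1/u = 0.1 * (1/u) := by ring
  have h7 : 1/(110*u) + 1.1*u ≥ 0.2 := by
    rw [ge_iff_le, ← sub_nonneg]
    have : 1/(110*u) + 1.1*u - 0.2 = (11*u-1)^2 / (110*u) := by field_simp; ring
    rw [this]; positivity
  have h8 : 1/(110*u) = (1/110) * (1/u) := by field_simp
  rw [h2]
  have h9 : (0:ℝ) < 1/u := by positivity
  nlinarith [h1, h3, h7]

lemma aux_nonneg (z : ℝ) (hz : 0 ≤ z) :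
    |Real.tanh z + z * (1 / Real.cosh z)^2| ≤ 1.2 := by
  set a := Real.exp z with ha
  set b := Real.exp (-z) with hb
  have hab : a * b = 1 := by rw [ha, hb, ← Real.exp_add]; simp
  have hapos : 0 < a := Real.exp_pos _
  have hbpos : 0 < b := Real.exp_pos _
  have hb1 : b ≤ 1 := by rw [hb]; exact Real.exp_le_one_iff.mpr (by linarith)
  have hcosh : Real.cosh z = (a + b) / 2 := Real.cosh_eq z
  have hsinh : Real.sinh z = (a - b) / 2 := Real.sinh_eq z
  have htanh : Real.tanh z = (a - b) / (a + b) := by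
    rw [Real.tanh_eq_sinh_div_cosh, hsinh, hcosh]
    field_simp
  have habpos : 0 < a + b := by linarith
  have hlog : Real.log (1/(b^2)) = 2 * z := by
    have hb2 : b^2 = Real.exp (-(2*z)) := by
      rw [hb, sq, ← Real.exp_add]; ring_nf
    rw [hb2, one_div, ← Real.exp_neg, neg_neg, Real.log_exp]
  have hkey := key_log (b^2) (by positivity)
  rw [hlog] at hkey
  -- hkey : 2*z ≤ 0.1/b^2 + 1.2 + 1.1*b^2
  have hkey2 : 2*z*b^2 ≤ 0.1 + 1.2*b^2 + 1.1*b^4 := by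
    have hb2 : (0:ℝ) < b^2 := by positivity
    have := mul_le_mul_of_nonneg_right hkey hb2.le
    have hd : 0.1/b^2 * b^2 = 0.1 := by field_simp
    nlinarith [this]
  have hexpr : Real.tanh z + z * (1 / Real.cosh z)^2
      = ((a-b)*(a+b) + 4*z) / (a+b)^2 := by
    rw [htanh, hcosh]
    field_simp
    ring
  rw [hexpr, abs_div, abs_of_pos (by positivity : (0:ℝ) < (a+b)^2)]
  rw [div_le_iff₀ (by positivity)]
  have hnum_nonneg : 0 ≤ (a-b)*(a+b) + 4*z := by
    nlinarith [hb1, hbpos, hz]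
  rw [abs_of_nonneg hnum_nonneg]
  -- goal : (a-b)*(a+b) + 4*z ≤ 1.2 * (a+b)^2
  -- multiply by b^2 identity: use a*b = 1
  nlinarith [hkey2, sq_nonneg b, mul_pos hapos hbpos, sq_nonneg (a-b), sq_nonneg (a*b-1), hbpos, mul_pos hbpos hbpos]

theorem abs_tanh_add_mul_sech_sq_le (z : ℝ) :
    |Real.tanh z + z * (1 / Real.cosh z)^2| ≤ 1.2 := by
  rcases le_or_gt 0 z with hz | hz
  · exact aux_nonneg z hz
  · have h := aux_nonneg (-z) (by linarith)
    rw [Real.tanh_neg, Real.cosh_neg] at h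
    have : Real.tanh z + z * (1 / Real.cosh z)^2
        = -(-Real.tanh z + -z * (1 / Real.cosh z)^2) := by ring
    rw [this, abs_neg]
    exact h
end

section
/- Let ψ(x,y) = log(exp(y⟨γ₁,x⟩)+exp(-y⟨γ₁,x⟩)) - log(exp(y⟨γ₂,x⟩)+exp(-y⟨γ₂,x⟩)) with ‖γ₁‖ ≤ 1, ‖γ₂‖ ≤ 1, ‖x‖ ≤ C. Then for any reference vector γ̃ with ‖γ̃‖ ≤ 1, |∂ψ/∂y(x,y)|² ≤ 2C²(1 + C|y|)²·(‖γ₁ - γ̃‖² + ‖γ₂ - γ̃‖²). -/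
/-!
The `y`-derivative of `ψ` is `f γ₁ - f γ₂` with `f γ = ⟪γ, x⟫ tanh (y ⟪γ, x⟫)`, since
`log (eˢ + e⁻ˢ)` has derivative `tanh s`. On `|a| ≤ C` the map `a ↦ a tanh (y a)` has derivative
`tanh (y a) + a y sech² (y a)`, of size at most `1 + C |y|`; as `|⟪γ, x⟫| ≤ C` on the unit ball,
`f` is `(1 + C |y|) C`-Lipschitz there. Comparing `f γ₁` and `f γ₂` with `f γ̃` and using
`(p + q)² ≤ 2 (p² + q²)` gives the bound.
-/

open RealInnerProductSpace Real

namespace Real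

theorem hasDerivAt_tanh_s5 (t : ℝ) : HasDerivAt tanh (1 / cosh t ^ 2) t := by
  have hcosh : cosh t ≠ 0 := (cosh_pos t).ne'
  have h := (hasDerivAt_sinh t).fun_div (hasDerivAt_cosh t) hcosh
  rw [show tanh = fun s ↦ sinh s / cosh s from funext tanh_eq_sinh_div_cosh]
  refine h.congr_deriv ?_
  rw [← cosh_sq_sub_sinh_sq t]
  ring

theorem hasDerivAt_log_exp_add_exp_neg (t : ℝ) :
    HasDerivAt (fun s ↦ log (exp s + exp (-s))) (tanh t) t := by
  have h := ((hasDerivAt_cosh t).const_mul 2).log (by positivity)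
  rw [show (fun s ↦ log (exp s + exp (-s))) = fun s ↦ log (2 * cosh s) by
    funext s; rw [cosh_eq]; ring_nf]
  convert h using 1
  rw [tanh_eq_sinh_div_cosh]
  field_simp

end Real

theorem hasDerivAt_log_exp_mul_add_exp_neg_mul (a y : ℝ) :
    HasDerivAt (fun y ↦ log (exp (y * a) + exp (-(y * a)))) (a * tanh (y * a)) y := by
  simpa [mul_comm a, Function.comp_def] using
    (hasDerivAt_log_exp_add_exp_neg (y * a)).comp y ((hasDerivAt_id y).mul_const a)

theorem hasDerivAt_mul_tanh_mul (y a : ℝ) :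
    HasDerivAt (fun a ↦ a * tanh (y * a)) (tanh (y * a) + a * (y / cosh (y * a) ^ 2)) a := by
  have h : HasDerivAt (fun a ↦ tanh (y * a)) (1 / cosh (y * a) ^ 2 * y) a := by
    simpa [Function.comp_def] using
      (hasDerivAt_tanh_s5 (y * a)).comp a ((hasDerivAt_id a).const_mul y)
  refine ((hasDerivAt_id a).fun_mul h).congr_deriv ?_
  simp only [id_eq]
  ring

theorem abs_deriv_mul_tanh_mul_le {y C a : ℝ} (ha : |a| ≤ C) :
    |tanh (y * a) + a * (y / cosh (y * a) ^ 2)| ≤ 1 + C * |y| :=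
  calc |tanh (y * a) + a * (y / cosh (y * a) ^ 2)|
      ≤ |tanh (y * a)| + |a| * (|y| / cosh (y * a) ^ 2) :=
        (abs_add_le _ _).trans_eq (by rw [abs_mul, abs_div, abs_of_pos (pow_pos (cosh_pos _) 2)])
    _ ≤ 1 + C * |y| := by
        gcongr
        · exact (abs_tanh_lt_one _).le
        · exact (abs_nonneg a).trans ha
        · exact div_le_self (abs_nonneg y) (one_le_pow₀ (one_le_cosh _))

theorem abs_mul_tanh_mul_sub_le {y C a b : ℝ} (ha : |a| ≤ C) (hb : |b| ≤ C) :
    |a * tanh (y * a) - b * tanh (y * b)| ≤ (1 + C * |y|) * |a - b| :=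
  (convex_Icc (-C) C).norm_image_sub_le_of_norm_hasDerivWithin_le
    (fun t _ ↦ (hasDerivAt_mul_tanh_mul y t).hasDerivWithinAt)
    (fun _ ht ↦ abs_deriv_mul_tanh_mul_le (abs_le.mpr ht)) (abs_le.mp hb) (abs_le.mp ha)

section InnerProductSpace

variable {E : Type*} [NormedAddCommGroup E] [InnerProductSpace ℝ E] {γ γ' x : E} {C : ℝ}

theorem abs_inner_le_of_norm_le_one (hγ : ‖γ‖ ≤ 1) (hx : ‖x‖ ≤ C) : |⟪γ, x⟫| ≤ C :=
  calc |⟪γ, x⟫| ≤ ‖γ‖ * ‖x‖ := abs_real_inner_le_norm γ x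
    _ ≤ 1 * C := by gcongr
    _ = C := one_mul C

theorem abs_inner_sub_inner_le (hx : ‖x‖ ≤ C) : |⟪γ, x⟫ - ⟪γ', x⟫| ≤ ‖γ - γ'‖ * C := by
  rw [← inner_sub_left]
  calc |⟪γ - γ', x⟫| ≤ ‖γ - γ'‖ * ‖x‖ := abs_real_inner_le_norm _ x
    _ ≤ ‖γ - γ'‖ * C := by gcongr

theorem abs_inner_mul_tanh_sub_le (y : ℝ) (hγ : ‖γ‖ ≤ 1) (hγ' : ‖γ'‖ ≤ 1) (hx : ‖x‖ ≤ C) :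
    |⟪γ, x⟫ * tanh (y * ⟪γ, x⟫) - ⟪γ', x⟫ * tanh (y * ⟪γ', x⟫)|
      ≤ (1 + C * |y|) * C * ‖γ - γ'‖ := by
  have hC : 0 ≤ C := (norm_nonneg x).trans hx
  calc _ ≤ (1 + C * |y|) * |⟪γ, x⟫ - ⟪γ', x⟫| :=
        abs_mul_tanh_mul_sub_le (abs_inner_le_of_norm_le_one hγ hx)
          (abs_inner_le_of_norm_le_one hγ' hx)
    _ ≤ (1 + C * |y|) * (‖γ - γ'‖ * C) := by gcongr; exact abs_inner_sub_inner_le hx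
    _ = (1 + C * |y|) * C * ‖γ - γ'‖ := by ring

end InnerProductSpace

theorem psi_deriv_sq_bound {d : ℕ} (γ₁ γ₂ γt x : EuclideanSpace ℝ (Fin d)) (C y : ℝ)
    (hγ₁ : ‖γ₁‖ ≤ 1) (hγ₂ : ‖γ₂‖ ≤ 1) (hγt : ‖γt‖ ≤ 1) (hx : ‖x‖ ≤ C) :
    |deriv (fun y : ℝ =>
        Real.log (Real.exp (y * ⟪γ₁, x⟫) + Real.exp (-(y * ⟪γ₁, x⟫)))
          - Real.log (Real.exp (y * ⟪γ₂, x⟫) + Real.exp (-(y * ⟪γ₂, x⟫)))) y|^2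
      ≤ 2 * C^2 * (1 + C * |y|)^2 * (‖γ₁ - γt‖^2 + ‖γ₂ - γt‖^2) := by
  set f : EuclideanSpace ℝ (Fin d) → ℝ := fun γ ↦ ⟪γ, x⟫ * tanh (y * ⟪γ, x⟫)
  have hderiv : deriv (fun y : ℝ =>
        Real.log (Real.exp (y * ⟪γ₁, x⟫) + Real.exp (-(y * ⟪γ₁, x⟫)))
          - Real.log (Real.exp (y * ⟪γ₂, x⟫) + Real.exp (-(y * ⟪γ₂, x⟫)))) y
      = (f γ₁ - f γt) - (f γ₂ - f γt) := by
    rw [((hasDerivAt_log_exp_mul_add_exp_neg_mul _ y).fun_sub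
      (hasDerivAt_log_exp_mul_add_exp_neg_mul _ y)).deriv]
    ring
  have h₁ := abs_inner_mul_tanh_sub_le y hγ₁ hγt hx
  have h₂ := abs_inner_mul_tanh_sub_le y hγ₂ hγt hx
  rw [hderiv]
  calc |(f γ₁ - f γt) - (f γ₂ - f γt)| ^ 2
      ≤ ((1 + C * |y|) * C * ‖γ₁ - γt‖ + (1 + C * |y|) * C * ‖γ₂ - γt‖) ^ 2 := by
        gcongr
        exact (abs_sub _ _).trans (add_le_add h₁ h₂)
    _ = ((1 + C * |y|) * C) ^ 2 * (‖γ₁ - γt‖ + ‖γ₂ - γt‖) ^ 2 := by ring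
    _ ≤ ((1 + C * |y|) * C) ^ 2 * (2 * (‖γ₁ - γt‖ ^ 2 + ‖γ₂ - γt‖ ^ 2)) := by
        gcongr; exact add_sq_le
    _ = 2 * C ^ 2 * (1 + C * |y|) ^ 2 * (‖γ₁ - γt‖ ^ 2 + ‖γ₂ - γt‖ ^ 2) := by ring
end
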